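/- arXiv:1207.5920 — 10 statements merged into one kernel-verified Lean document; each statement's English description precedes it below -/
import Mathlib

section
/- For every ℓ > 0, every y > ℓ/2, and every integer n ≥ 2, the functions h_{n,ℓ} satisfy the recurrence relation h_{n,ℓ}(y) = (4·h_{n-1,ℓ}(y)³ + 2ℓ²·h_{n-1,ℓ}(y) + ℓ²·h_{n-2,ℓ}(y)) / (4·h_{n-2,ℓ}(y)·h_{n-1,ℓ}(y) − ℓ²); in particular the denominator 4·h_{n-2,ℓ}(y)·h_{n-1,ℓ}(y) − ℓ² is nonzero there. Moreover h_{0,ℓ}(y) = y and h_{1,ℓ}(y) = y + 4yℓ²/(4y² − ℓ²). -/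
/-!
With `a = 2y + ℓ` and `b = 2y - ℓ` we have `4y² - ℓ² = ab` and `ℓ = (a - b)/2`, so
`h_n = (a^(2n+1) + b^(2n+1)) / (4 (ab)^n)`. In these variables the denominator of the recurrence
is a perfect square, `4 h_n h_(n+1) - ℓ² = (a^(2n+2) + b^(2n+2))² / (4 (ab)^(2n+1))`, hence nonzero,
and the recurrence itself is a polynomial identity in `a`, `b`, `a^n`, `b^n`.
-/

/-- `h ℓ n y = ((2y+ℓ)^(2n+1) + (2y−ℓ)^(2n+1)) / (4·(4y²−ℓ²)^n)`. -/
noncomputable def catenoidH (ℓ : ℝ) (n : ℕ) (y : ℝ) : ℝ :=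
  ((2*y + ℓ)^(2*n+1) + (2*y - ℓ)^(2*n+1)) / (4 * (4*y^2 - ℓ^2)^n)

noncomputable def powerSumRatio (a b : ℝ) (n : ℕ) : ℝ :=
  (a ^ (2 * n + 1) + b ^ (2 * n + 1)) / (4 * (a * b) ^ n)

namespace powerSumRatio
variable {a b : ℝ}

theorem four_mul_mul_succ_sub (ha : a ≠ 0) (hb : b ≠ 0) (n : ℕ) :
    4 * powerSumRatio a b n * powerSumRatio a b (n + 1) - ((a - b) / 2) ^ 2 =
      (a ^ (2 * n + 2) + b ^ (2 * n + 2)) ^ 2 / (4 * (a * b) ^ (2 * n + 1)) := by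
  unfold powerSumRatio
  field_simp
  ring

theorem four_mul_mul_succ_sub_ne_zero (ha : a ≠ 0) (hb : b ≠ 0) (n : ℕ) :
    4 * powerSumRatio a b n * powerSumRatio a b (n + 1) - ((a - b) / 2) ^ 2 ≠ 0 := by
  rw [four_mul_mul_succ_sub ha hb]
  have : a ^ (2 * n + 2) + b ^ (2 * n + 2) ≠ 0 := by
    rw [show 2 * n + 2 = 2 * (n + 1) by ring, pow_mul, pow_mul]
    positivity
  positivity

theorem recurrence (ha : a ≠ 0) (hb : b ≠ 0) (n : ℕ) :
    powerSumRatio a b (n + 2) *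
        (4 * powerSumRatio a b n * powerSumRatio a b (n + 1) - ((a - b) / 2) ^ 2) =
      4 * powerSumRatio a b (n + 1) ^ 3 + 2 * ((a - b) / 2) ^ 2 * powerSumRatio a b (n + 1)
        + ((a - b) / 2) ^ 2 * powerSumRatio a b n := by
  rw [four_mul_mul_succ_sub ha hb]
  unfold powerSumRatio
  field_simp
  ring

end powerSumRatio

theorem catenoidH_eq_powerSumRatio (ℓ : ℝ) (n : ℕ) (y : ℝ) :
    catenoidH ℓ n y = powerSumRatio (2 * y + ℓ) (2 * y - ℓ) n := by
  unfold catenoidH powerSumRatio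
  ring_nf

theorem stmt_0 (ℓ : ℝ) (hℓ : 0 < ℓ) (y : ℝ) (hy : ℓ/2 < y) :
    (∀ n : ℕ, 2 ≤ n →
      4 * catenoidH ℓ (n-2) y * catenoidH ℓ (n-1) y - ℓ^2 ≠ 0 ∧
      catenoidH ℓ n y =
        (4 * (catenoidH ℓ (n-1) y)^3 + 2*ℓ^2 * catenoidH ℓ (n-1) y
          + ℓ^2 * catenoidH ℓ (n-2) y) /
        (4 * catenoidH ℓ (n-2) y * catenoidH ℓ (n-1) y - ℓ^2)) ∧
    catenoidH ℓ 0 y = y ∧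
    catenoidH ℓ 1 y = y + 4*y*ℓ^2 / (4*y^2 - ℓ^2) := by
  have ha : 2 * y + ℓ ≠ 0 := by linarith
  have hb : 2 * y - ℓ ≠ 0 := by linarith
  have half_diff : ((2 * y + ℓ) - (2 * y - ℓ)) / 2 = ℓ := by ring
  refine ⟨fun n hn => ?_, ?_, ?_⟩
  · obtain ⟨m, rfl⟩ := Nat.exists_eq_add_of_le' hn
    rw [show m + 2 - 2 = m by omega, show m + 2 - 1 = m + 1 by omega]
    simp only [catenoidH_eq_powerSumRatio]
    have hden := powerSumRatio.four_mul_mul_succ_sub_ne_zero ha hb m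
    have hrec := powerSumRatio.recurrence ha hb m
    rw [half_diff] at hden hrec
    exact ⟨hden, eq_div_of_mul_eq hden hrec⟩
  · simp only [catenoidH_eq_powerSumRatio, powerSumRatio]
    ring
  · rw [catenoidH_eq_powerSumRatio, powerSumRatio,
      show 4 * y ^ 2 - ℓ ^ 2 = (2 * y + ℓ) * (2 * y - ℓ) by ring]
    field_simp
    ring
end

section
/- For every ℓ > 0, every y > ℓ/2, and every n ∈ ℕ, one has h_{n,ℓ}(y) = y · V_n(1 + 2ℓ²/(4y² − ℓ²)), where V_n is the n-th Chebyshev polynomial of the third kind. -/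
/-- Chebyshev polynomials of the third kind, as real functions. -/
noncomputable def chebyshevV : ℕ → ℝ → ℝ
  | 0, _ => 1
  | 1, x => 2*x - 1
  | (n+2), x => 2*x * chebyshevV (n+1) x - chebyshevV n x

theorem pow_add_pow_eq_mul_chebyshevV (a b x : ℝ) (hx : 2 * a * b * x = a ^ 2 + b ^ 2) (n : ℕ) :
    a ^ (2 * n + 1) + b ^ (2 * n + 1) = (a + b) * (a * b) ^ n * chebyshevV n x := by
  induction n using Nat.twoStepInduction with
  | zero => simp [chebyshevV]
  | one => simp only [chebyshevV]; linear_combination -(a + b) * hx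
  | more n ih ih' =>
    simp only [chebyshevV]
    linear_combination (a ^ 2 + b ^ 2) * ih' - (a * b) ^ 2 * ih
      - (a + b) * (a * b) ^ (n + 1) * chebyshevV (n + 1) x * hx

theorem stmt_2 (ℓ : ℝ) (hℓ : 0 < ℓ) (y : ℝ) (hy : ℓ/2 < y) (n : ℕ) :
    catenoidH ℓ n y = y * chebyshevV n (1 + 2*ℓ^2 / (4*y^2 - ℓ^2)) := by
  rw [catenoidH]
  have hab : (2 * y + ℓ) * (2 * y - ℓ) = 4 * y ^ 2 - ℓ ^ 2 := by ring
  have hD : 4 * y ^ 2 - ℓ ^ 2 ≠ 0 := by nlinarith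
  set D := 4 * y ^ 2 - ℓ ^ 2
  have hx : 2 * (2 * y + ℓ) * (2 * y - ℓ) * (1 + 2 * ℓ ^ 2 / D)
      = (2 * y + ℓ) ^ 2 + (2 * y - ℓ) ^ 2 := by
    rw [mul_assoc 2, hab]
    field_simp
    ring
  rw [pow_add_pow_eq_mul_chebyshevV _ _ _ hx, hab]
  generalize chebyshevV n _ = v
  field_simp
  ring
end

section
/- For every n ∈ ℕ and every real x, the terminating Gauss hypergeometric sum F(n+1, −n; 1/2; −x²) has the closed form: Σ_{i=0}^{n} 4^i · (n+i)! / ((n−i)! · (2i)!) · x^{2i} = ((√(1+x²) + x)^{2n+1} + (√(1+x²) − x)^{2n+1}) / (2·√(1+x²)). -/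
/-!
Since `(n+i)! / ((n-i)! (2i)!) = C(n+i, 2i)`, the left side is the Morgan–Voyce polynomial
`b_n(y) = ∑ C(n+i, 2i) yⁱ` at `y = 4x²`, and Pascal's rule gives `b_{n+2} + b_n = (2 + y) b_{n+1}`.
With `s = √(1+x²)`, the numbers `a = s + x` and `b = s - x` satisfy `ab = 1` and `a² + b² = 2 + 4x²`,
so `a^(2n+1) + b^(2n+1)` obeys the same recurrence. Both sides agree for `n = 0, 1`.
-/

open Finset

theorem Nat.choose_add_two_add_choose (m j : ℕ) :
    (m + 2).choose (j + 2) + m.choose (j + 2) = 2 * (m + 1).choose (j + 2) + m.choose j := by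
  simp only [Nat.choose_succ_succ]
  ring

section MorganVoyce

variable {R : Type*} [CommSemiring R]

def morganVoyceB (n : ℕ) (y : R) : R :=
  ∑ i ∈ range (n + 1), ((n + i).choose (2 * i) : R) * y ^ i

theorem morganVoyceB_eq_sum_range {n N : ℕ} (h : n + 1 ≤ N) (y : R) :
    morganVoyceB n y = ∑ i ∈ range N, ((n + i).choose (2 * i) : R) * y ^ i := by
  refine sum_subset (range_subset_range.2 h) fun i _ hi => ?_
  rw [mem_range, not_lt] at hi
  rw [Nat.choose_eq_zero_of_lt (by omega), Nat.cast_zero, zero_mul]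

theorem morganVoyceB_add_two (n : ℕ) (y : R) :
    morganVoyceB (n + 2) y + morganVoyceB n y = (2 + y) * morganVoyceB (n + 1) y := by
  have hsum : morganVoyceB (n + 2) y + morganVoyceB n y =
      ∑ k ∈ range (n + 2),
        (((n + k + 3).choose (2 * k + 2) + (n + k + 1).choose (2 * k + 2) : ℕ) : R) * y ^ (k + 1)
        + 2 := by
    rw [morganVoyceB_eq_sum_range (N := n + 3) le_rfl,
      morganVoyceB_eq_sum_range (n := n) (N := n + 3) (by omega), ← sum_add_distrib,
      sum_range_succ']
    congr 1
    · refine sum_congr rfl fun k _ => ?_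
      rw [show n + 2 + (k + 1) = n + k + 3 by omega, show n + (k + 1) = n + k + 1 by omega,
        show 2 * (k + 1) = 2 * k + 2 by omega]
      push_cast
      ring
    · norm_num
  have hdouble : 2 * morganVoyceB (n + 1) y =
      ∑ k ∈ range (n + 2), (2 * (n + k + 2).choose (2 * k + 2) : ℕ) * y ^ (k + 1) + 2 := by
    rw [morganVoyceB_eq_sum_range (N := n + 3) (by omega), sum_range_succ', mul_add, mul_sum]
    congr 1
    · refine sum_congr rfl fun k _ => ?_
      rw [show n + 1 + (k + 1) = n + k + 2 by omega, show 2 * (k + 1) = 2 * k + 2 by omega]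
      push_cast
      ring
    · norm_num
  have hshift : y * morganVoyceB (n + 1) y =
      ∑ k ∈ range (n + 2), ((n + k + 1).choose (2 * k) : R) * y ^ (k + 1) := by
    rw [morganVoyceB, mul_sum]
    refine sum_congr rfl fun k _ => ?_
    rw [show n + 1 + k = n + k + 1 by omega]
    ring
  rw [hsum, add_mul, hdouble, hshift, add_right_comm, ← sum_add_distrib]
  congr 1
  refine sum_congr rfl fun k _ => ?_
  rw [Nat.choose_add_two_add_choose]
  push_cast
  ring

end MorganVoyce

theorem pow_odd_add_pow_odd_add_two {R : Type*} [CommRing R] {a b : R} (hab : a * b = 1) (n : ℕ) :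
    a ^ (2 * (n + 2) + 1) + b ^ (2 * (n + 2) + 1) + (a ^ (2 * n + 1) + b ^ (2 * n + 1)) =
      (a ^ 2 + b ^ 2) * (a ^ (2 * (n + 1) + 1) + b ^ (2 * (n + 1) + 1)) := by
  linear_combination (-(1 + a * b) * (a ^ (2 * n + 1) + b ^ (2 * n + 1))) * hab

theorem factorial_sum_eq_morganVoyceB {K : Type*} [Field K] [CharZero K] (n : ℕ) (x : K) :
    ∑ i ∈ range (n + 1),
        (4 : K) ^ i * (n + i).factorial / ((n - i).factorial * (2 * i).factorial) * x ^ (2 * i) =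
      morganVoyceB n (4 * x ^ 2) := by
  refine sum_congr rfl fun i hi => ?_
  have hi : i ≤ n := Nat.lt_succ_iff.1 (mem_range.1 hi)
  rw [Nat.cast_choose K (by omega : 2 * i ≤ n + i), show n + i - 2 * i = n - i by omega]
  ring

theorem stmt_3 (n : ℕ) (x : ℝ) :
    ∑ i ∈ range (n+1),
        (4:ℝ)^i * (Nat.factorial (n+i)) / ((Nat.factorial (n-i)) * Nat.factorial (2*i))
          * x^(2*i)
      = ((Real.sqrt (1 + x^2) + x)^(2*n+1) + (Real.sqrt (1 + x^2) - x)^(2*n+1)) /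
        (2 * Real.sqrt (1 + x^2)) := by
  rw [factorial_sum_eq_morganVoyceB]
  set s := Real.sqrt (1 + x ^ 2)
  have hs : 0 < s := Real.sqrt_pos.2 (by positivity)
  have hs2 : s ^ 2 = 1 + x ^ 2 := Real.sq_sqrt (by positivity)
  have hab : (s + x) * (s - x) = 1 := by linear_combination hs2
  rw [eq_div_iff (by positivity)]
  induction n using Nat.twoStepInduction with
  | zero =>
    simp only [morganVoyceB, zero_add, range_one, sum_singleton, mul_zero, Nat.choose_self,
      Nat.cast_one, pow_zero, one_mul]
    ring
  | one =>
    simp only [morganVoyceB, Nat.reduceAdd, sum_range_succ, range_one, sum_singleton, mul_zero,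
      Nat.choose_succ_self_right, Nat.choose_self, Nat.cast_one, pow_zero, pow_one]
    linear_combination (-2 * s) * hs2
  | more m ih₀ ih₁ =>
    linear_combination (2 * s) * morganVoyceB_add_two m (4 * x ^ 2)
      - pow_odd_add_pow_odd_add_two hab m - ih₀ + (2 + 4 * x ^ 2) * ih₁
      - 2 * ((s + x) ^ (2 * (m + 1) + 1) + (s - x) ^ (2 * (m + 1) + 1)) * hs2
end

section
/- For every ℓ > 0 and every integer n ≥ 1, the function h_{n,ℓ} is positive and strictly convex on the open interval (ℓ/2, ∞). -/
open Set

theorem StrictConvexOn.perspective_comp_affineMap {E : Type*} [AddCommGroup E] [Module ℝ E]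
    {φ : ℝ → ℝ} {s : Set ℝ} (hφ : StrictConvexOn ℝ s φ) {D : Set E} (hD : Convex ℝ D)
    (p q : E →ᵃ[ℝ] ℝ) (hq : ∀ x ∈ D, 0 < q x) (hs : ∀ x ∈ D, p x / q x ∈ s)
    (hinj : InjOn (fun x => p x / q x) D) :
    StrictConvexOn ℝ D (fun x => q x * φ (p x / q x)) := by
  refine ⟨hD, fun x hx y hy hxy a b ha hb hab => ?_⟩
  have hqx := hq x hx
  have hqy := hq y hy
  simp only [smul_eq_mul, Convex.combo_affine_apply hab]
  set Q := a * q x + b * q y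
  have hQ : 0 < Q := by positivity
  have hratio : (a * p x + b * p y) / Q
      = (a * q x / Q) * (p x / q x) + (b * q y / Q) * (p y / q y) := by
    field_simp
  have hweights : a * q x / Q + b * q y / Q = 1 := by
    rw [← add_div, div_self hQ.ne']
  have hlt := hφ.2 (hs x hx) (hs y hy) (hinj.ne hx hy hxy) (by positivity) (by positivity)
    hweights
  simp only [smul_eq_mul] at hlt
  calc Q * φ ((a * p x + b * p y) / Q)
      < Q * (a * q x / Q * φ (p x / q x) + b * q y / Q * φ (p y / q y)) := by
        rw [hratio]; exact mul_lt_mul_of_pos_left hlt hQ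
    _ = a * (q x * φ (p x / q x)) + b * (q y * φ (p y / q y)) := by
        field_simp

noncomputable def halfAdd (c : ℝ) : ℝ →ᵃ[ℝ] ℝ :=
  (2⁻¹ : ℝ) • AffineMap.id ℝ ℝ + AffineMap.const ℝ ℝ c

@[simp]
theorem halfAdd_apply (c y : ℝ) : halfAdd c y = y / 2 + c := by
  show (2⁻¹ : ℝ) * y + c = _
  ring

theorem injOn_halfAdd_div_halfAdd {c d : ℝ} (hcd : c ≠ d) :
    InjOn (fun y => halfAdd c y / halfAdd d y) {y | halfAdd d y ≠ 0} := by
  intro x hx y hy h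
  rw [div_eq_div_iff hx hy] at h
  simp only [halfAdd_apply] at h
  have : (c - d) * (x - y) = 0 := by linear_combination (-2) * h
  simpa [sub_ne_zero.2 hcd, sub_eq_zero] using this

theorem catenoidH_eq_perspective {ℓ y : ℝ} (n : ℕ) (hplus : 2 * y + ℓ ≠ 0)
    (hminus : 2 * y - ℓ ≠ 0) :
    catenoidH ℓ n y
      = halfAdd (-(ℓ / 4)) y * (halfAdd (ℓ / 4) y / halfAdd (-(ℓ / 4)) y) ^ (n + 1)
        + halfAdd (ℓ / 4) y * (halfAdd (-(ℓ / 4)) y / halfAdd (ℓ / 4) y) ^ (n + 1) := by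
  rw [catenoidH, halfAdd_apply, halfAdd_apply, show y / 2 + ℓ / 4 = (2 * y + ℓ) / 4 by ring,
    show y / 2 + -(ℓ / 4) = (2 * y - ℓ) / 4 by ring,
    show 4 * y ^ 2 - ℓ ^ 2 = (2 * y + ℓ) * (2 * y - ℓ) by ring,
    div_div_div_cancel_right₀ (by norm_num), div_div_div_cancel_right₀ (by norm_num),
    div_pow, div_pow, mul_pow]
  field_simp
  ring

theorem stmt_5 (ℓ : ℝ) (hℓ : 0 < ℓ) (n : ℕ) (hn : 1 ≤ n) :
    (∀ y ∈ Set.Ioi (ℓ/2), 0 < catenoidH ℓ n y) ∧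
    StrictConvexOn ℝ (Set.Ioi (ℓ/2)) (catenoidH ℓ n) := by
  set p := halfAdd (ℓ / 4)
  set q := halfAdd (-(ℓ / 4))
  have hpos : ∀ y ∈ Ioi (ℓ / 2), 0 < p y ∧ 0 < q y := fun y (hy : ℓ / 2 < y) => by
    simp only [p, q, halfAdd_apply]; constructor <;> linarith
  have hsplit : EqOn (fun y => q y * (p y / q y) ^ (n + 1) + p y * (q y / p y) ^ (n + 1))
      (catenoidH ℓ n) (Ioi (ℓ / 2)) := fun y (hy : ℓ / 2 < y) =>
    (catenoidH_eq_perspective n (by linarith) (by linarith)).symm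
  have hpow : StrictConvexOn ℝ (Ici 0) fun t : ℝ => t ^ (n + 1) := strictConvexOn_pow (by omega)
  refine ⟨fun y hy => ?_, StrictConvexOn.congr ?_ hsplit⟩
  · obtain ⟨hpy, hqy⟩ := hpos y hy
    rw [← hsplit hy]
    positivity
  · have hℓ4 : ℓ / 4 ≠ -(ℓ / 4) := by linarith
    exact (hpow.perspective_comp_affineMap (convex_Ioi _) p q (fun y hy => (hpos y hy).2)
      (fun y hy => (div_pos (hpos y hy).1 (hpos y hy).2).le)
      ((injOn_halfAdd_div_halfAdd hℓ4).mono fun y hy => (hpos y hy).2.ne')).add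
      (hpow.perspective_comp_affineMap (convex_Ioi _) q p (fun y hy => (hpos y hy).1)
      (fun y hy => (div_pos (hpos y hy).2 (hpos y hy).1).le)
      ((injOn_halfAdd_div_halfAdd hℓ4.symm).mono fun y hy => (hpos y hy).1.ne'))
end

section
/- For every ℓ > 0 and every integer n ≥ 1, there exists a unique point μ_{n,ℓ} ∈ (ℓ/2, ∞) at which the derivative of h_{n,ℓ} vanishes, and h_{n,ℓ} attains its minimum over (ℓ/2, ∞) at μ_{n,ℓ}; i.e., h_{n,ℓ}(y) ≥ h_{n,ℓ}(μ_{n,ℓ}) for all y > ℓ/2, with equality only at y = μ_{n,ℓ}. -/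
open Real Set

noncomputable def logRatio (ℓ y : ℝ) : ℝ := log ((2 * y + ℓ) / (2 * y - ℓ))

noncomputable def coshDiff (n : ℕ) (s : ℝ) : ℝ :=
  (n + 1) * cosh (n * s) - n * cosh ((n + 1) * s)

lemma Real.cosh_nat_mul_log (k : ℕ) {t : ℝ} (ht : 0 < t) :
    cosh (k * log t) = (t ^ k + (t ^ k)⁻¹) / 2 := by
  rw [← log_pow, cosh_log (pow_pos ht k)]

lemma hasDerivAt_coshDiff (n : ℕ) (s : ℝ) :
    HasDerivAt (coshDiff n) (n * (n + 1) * (sinh (n * s) - sinh ((n + 1) * s))) s := by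
  have hcosh (c : ℝ) : HasDerivAt (fun s => cosh (c * s)) (sinh (c * s) * c) s := by
    simpa using ((hasDerivAt_id s).const_mul c).cosh
  exact ((hcosh n).const_mul ((n : ℝ) + 1) |>.sub ((hcosh (n + 1)).const_mul (n : ℝ)))
    |>.congr_deriv (by ring)

lemma coshDiff_zero (n : ℕ) : coshDiff n 0 = 1 := by simp [coshDiff]

lemma coshDiff_three_neg {n : ℕ} (hn : 1 ≤ n) : coshDiff n 3 < 0 := by
  have hn' : (1 : ℝ) ≤ n := by exact_mod_cast hn
  have hc : 0 < cosh (n * 3) := cosh_pos _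
  have hsinh : 0 ≤ sinh (n * 3) * sinh 3 :=
    mul_nonneg (sinh_nonneg_iff.2 (by positivity)) (sinh_nonneg_iff.2 (by norm_num))
  have hcosh3 : 2 < cosh 3 := by
    have := add_one_le_exp (3 : ℝ)
    have := exp_pos (-3)
    rw [cosh_eq]; linarith
  have hadd : cosh ((n + 1) * 3) = cosh (n * 3) * cosh 3 + sinh (n * 3) * sinh 3 := by
    rw [add_mul, one_mul, cosh_add]
  rw [coshDiff, hadd]
  nlinarith [mul_pos (mul_pos (by positivity : (0:ℝ) < n) hc) (sub_pos.2 hcosh3),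
    mul_nonneg (by positivity : (0:ℝ) ≤ n) hsinh, mul_nonneg (sub_nonneg.2 hn') hc.le]

lemma coshDiff_strictAntiOn {n : ℕ} (hn : 1 ≤ n) : StrictAntiOn (coshDiff n) (Ici 0) := by
  refine strictAntiOn_of_deriv_neg (convex_Ici 0)
    (fun s _ => (hasDerivAt_coshDiff n s).continuousAt.continuousWithinAt) fun s hs => ?_
  rw [interior_Ici] at hs
  have hn' : (0 : ℝ) < n := by exact_mod_cast hn
  rw [(hasDerivAt_coshDiff n s).deriv]
  refine mul_neg_of_pos_of_neg (by positivity) (sub_neg.2 (sinh_lt_sinh.2 ?_))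
  nlinarith [mem_Ioi.1 hs]

lemma exists_pos_coshDiff_eq_zero {n : ℕ} (hn : 1 ≤ n) : ∃ s, 0 < s ∧ coshDiff n s = 0 := by
  have hcont : ContinuousOn (coshDiff n) (Icc 0 3) :=
    fun s _ => (hasDerivAt_coshDiff n s).continuousAt.continuousWithinAt
  obtain ⟨s, hs, hs0⟩ := intermediate_value_Icc' (by norm_num) hcont
    ⟨(coshDiff_three_neg hn).le, (coshDiff_zero n).symm ▸ zero_le_one⟩
  refine ⟨s, hs.1.lt_of_ne ?_, hs0⟩
  rintro rfl
  simp [coshDiff_zero] at hs0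

lemma coshDiff_log (n : ℕ) {t : ℝ} (ht : 0 < t) :
    coshDiff n (log t) =
      ((n + 1) * (t ^ n + (t ^ n)⁻¹) - n * (t ^ (n + 1) + (t ^ (n + 1))⁻¹)) / 2 := by
  have := cosh_nat_mul_log (n + 1) ht
  push_cast at this
  rw [coshDiff, cosh_nat_mul_log n ht, this]
  ring

lemma logRatio_pos {ℓ y : ℝ} (hℓ : 0 < ℓ) (hy : ℓ / 2 < y) : 0 < logRatio ℓ y :=
  log_pos ((one_lt_div (by linarith)).2 (by linarith))

lemma logRatio_strictAntiOn {ℓ : ℝ} (hℓ : 0 < ℓ) :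
    StrictAntiOn (logRatio ℓ) (Ioi (ℓ / 2)) := by
  intro y hy z hz hyz
  have hy' : 0 < 2 * y - ℓ := by linarith [mem_Ioi.1 hy]
  have hz' : 0 < 2 * z - ℓ := by linarith [mem_Ioi.1 hz]
  refine log_lt_log (div_pos (by linarith) hz') ((div_lt_div_iff₀ hz' hy').2 ?_)
  nlinarith

lemma exists_logRatio_eq {ℓ s : ℝ} (hℓ : 0 < ℓ) (hs : 0 < s) :
    ∃ y, ℓ / 2 < y ∧ logRatio ℓ y = s := by
  have he : 0 < exp s - 1 := by linarith [one_lt_exp_iff.2 hs]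
  refine ⟨ℓ / 2 * ((exp s + 1) / (exp s - 1)), ?_, ?_⟩
  · rw [lt_mul_iff_one_lt_right (by linarith), one_lt_div he]
    linarith
  · have hratio : (2 * (ℓ / 2 * ((exp s + 1) / (exp s - 1))) + ℓ) /
        (2 * (ℓ / 2 * ((exp s + 1) / (exp s - 1))) - ℓ) = exp s := by
      field_simp
      ring
    rw [logRatio, hratio, log_exp]

lemma hasDerivAt_catenoidH {ℓ y : ℝ} (n : ℕ) (hℓ : 0 < ℓ) (hy : ℓ / 2 < y) :
    HasDerivAt (catenoidH ℓ n) (coshDiff n (logRatio ℓ y)) y := by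
  have ha : 0 < 2 * y + ℓ := by linarith
  have hb : 0 < 2 * y - ℓ := by linarith
  have hA : HasDerivAt (fun y => 2 * y + ℓ) 2 y := by
    simpa using ((hasDerivAt_id y).const_mul 2).add_const ℓ
  have hB : HasDerivAt (fun y => 2 * y - ℓ) 2 y := by
    simpa using ((hasDerivAt_id y).const_mul 2).sub_const ℓ
  have hC : HasDerivAt (fun y => 4 * y ^ 2 - ℓ ^ 2) (4 * (2 * y)) y := by
    simpa using (((hasDerivAt_id y).pow 2).const_mul 4).sub_const (ℓ ^ 2)
  have hden : 4 * (4 * y ^ 2 - ℓ ^ 2) ^ n ≠ 0 := by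
    have : 0 < 4 * y ^ 2 - ℓ ^ 2 := by nlinarith
    positivity
  refine ((hA.fun_pow _).fun_add (hB.fun_pow _) |>.div ((hC.fun_pow n).const_mul 4) hden)
    |>.congr_deriv ?_
  rw [logRatio, coshDiff_log n (div_pos ha hb)]
  rw [show 4 * y ^ 2 - ℓ ^ 2 = (2 * y + ℓ) * (2 * y - ℓ) by ring,
    show 4 * (2 * y) = 2 * ((2 * y + ℓ) + (2 * y - ℓ)) by ring]
  generalize 2 * y + ℓ = a at ha ⊢
  generalize 2 * y - ℓ = b at hb ⊢
  rcases n with _ | m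
  · norm_num
  · simp only [Nat.add_sub_cancel, div_pow]
    push_cast
    field_simp
    ring

lemma deriv_catenoidH_strictMonoOn {ℓ : ℝ} {n : ℕ} (hℓ : 0 < ℓ) (hn : 1 ≤ n) :
    StrictMonoOn (deriv (catenoidH ℓ n)) (Ioi (ℓ / 2)) :=
  ((coshDiff_strictAntiOn hn).comp (logRatio_strictAntiOn hℓ)
    fun _ hy => (logRatio_pos hℓ hy).le).congr
    fun _ hy => ((hasDerivAt_catenoidH n hℓ hy).deriv).symm

lemma strictConvexOn_catenoidH {ℓ : ℝ} {n : ℕ} (hℓ : 0 < ℓ) (hn : 1 ≤ n) :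
    StrictConvexOn ℝ (Ioi (ℓ / 2)) (catenoidH ℓ n) :=
  StrictMonoOn.strictConvexOn_of_deriv (convex_Ioi _)
    (fun _ hy => (hasDerivAt_catenoidH n hℓ hy).continuousAt.continuousWithinAt)
    (by rw [interior_Ioi]; exact deriv_catenoidH_strictMonoOn hℓ hn)

lemma StrictConvexOn.lt_of_hasDerivAt_zero {S : Set ℝ} {f : ℝ → ℝ} {x y : ℝ}
    (hf : StrictConvexOn ℝ S f) (hx : x ∈ S) (hy : y ∈ S) (hyx : y ≠ x)
    (hfx : HasDerivAt f 0 x) :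
    f x < f y := by
  rcases hyx.lt_or_gt with h | h
  · have := hf.slope_lt_of_hasDerivAt hy hx h hfx
    rw [slope_def_field, div_lt_iff₀ (sub_pos.2 h), zero_mul] at this
    linarith
  · have := hf.lt_slope_of_hasDerivAt hx hy h hfx
    rw [slope_def_field, lt_div_iff₀ (sub_pos.2 h), zero_mul] at this
    linarith

theorem stmt_7 (ℓ : ℝ) (hℓ : 0 < ℓ) (n : ℕ) (hn : 1 ≤ n) :
    ∃ μ : ℝ, ℓ/2 < μ ∧ deriv (catenoidH ℓ n) μ = 0 ∧
      (∀ y : ℝ, ℓ/2 < y → deriv (catenoidH ℓ n) y = 0 → y = μ) ∧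
      (∀ y : ℝ, ℓ/2 < y → catenoidH ℓ n μ ≤ catenoidH ℓ n y) ∧
      (∀ y : ℝ, ℓ/2 < y → catenoidH ℓ n y = catenoidH ℓ n μ → y = μ) := by
  obtain ⟨s, hs, hs0⟩ := exists_pos_coshDiff_eq_zero hn
  obtain ⟨μ, hμ, hμs⟩ := exists_logRatio_eq hℓ hs
  have hcrit : HasDerivAt (catenoidH ℓ n) 0 μ := by
    simpa [hμs, hs0] using hasDerivAt_catenoidH n hℓ hμ
  have hmin : ∀ y, ℓ / 2 < y → y ≠ μ → catenoidH ℓ n μ < catenoidH ℓ n y :=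
    fun y hy hyμ => (strictConvexOn_catenoidH hℓ hn).lt_of_hasDerivAt_zero hμ hy hyμ hcrit
  refine ⟨μ, hμ, hcrit.deriv, fun y hy hy0 => ?_, fun y hy => ?_, fun y hy heq => ?_⟩
  · exact (deriv_catenoidH_strictMonoOn hℓ hn).injOn hy hμ (hy0.trans hcrit.deriv.symm)
  · rcases eq_or_ne y μ with rfl | hyμ
    exacts [le_rfl, (hmin y hy hyμ).le]
  · by_contra hyμ
    exact (hmin y hy hyμ).ne' heq
end

section
/- (Theorem 2.4(2)) Let ℓ > 0, m ≥ 1, and let y* > ℓ/2 with a := h_{m,ℓ}(y*). Then the point (y₀, y₁, …, y_{m−1}) := (h_{0,ℓ}(y*), h_{1,ℓ}(y*), …, h_{m−1,ℓ}(y*)) is a critical point of T_{a,m,ℓ}, i.e., all first-order partial derivatives ∂T_{a,m,ℓ}/∂y_i vanish at this point for 0 ≤ i ≤ m−1. Consequently the symmetric piecewise truncated conical surface D_{2m+1,ℓ}(a, y_{m−1}, …, y_0, y_0, …, y_{m−1}, a), whose area is 2π·T_{a,m,ℓ}(y₀,…,y_{m−1}), is minimal. -/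
open Finset

/-- `S ℓ s t = (s+t)·√((t−s)² + ℓ²)`, the (1/π-scaled) area of a truncated cone. -/
noncomputable def coneS (ℓ s t : ℝ) : ℝ := (s + t) * Real.sqrt ((t - s)^2 + ℓ^2)

/-- `T a ℓ m y = y₀ℓ + Σ_{i=1}^{m−1} S_ℓ(y_{i−1}, y_i) + S_ℓ(y_{m−1}, a)`
(half the area of the symmetric PTC surface, divided by π). -/
noncomputable def coneT (a ℓ : ℝ) (m : ℕ) (y : ℕ → ℝ) : ℝ :=
  y 0 * ℓ + (∑ i ∈ range (m-1), coneS ℓ (y i) (y (i+1))) + coneS ℓ (y (m-1)) a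

/-!
Write `u = 2y + ℓ = c e^θ` and `v = 2y − ℓ = c e^(−θ)`. Then `h_n = (c/2) cosh((2n+1)θ)`: the
radii `h_n` sample a catenary at equally spaced heights, and `ℓ = c sinh θ`. Along this chain the
partial derivative of the cone area `S_ℓ(h_n, h_{n+1})` in its upper radius is `D_{n+1}` and in
its lower radius is `−D_n`, where `D_n = c sinh((2n+1)θ)` (`catenoidD`). So in `∂T/∂y_i` the two
cones meeting at `y_i` cancel, and for `i = 0` the disc term `y₀ℓ` cancels `−D_0 = −ℓ`.
-/

noncomputable def catenoidD (ℓ : ℝ) (n : ℕ) (y : ℝ) : ℝ :=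
  ((2*y + ℓ)^(2*n+1) - (2*y - ℓ)^(2*n+1)) / (2 * (4*y^2 - ℓ^2)^n)

theorem catenoidD_zero (ℓ y : ℝ) : catenoidD ℓ 0 y = ℓ := by
  simp [catenoidD]

theorem pow_two_mul_add_one (x : ℝ) (n : ℕ) : x ^ (2 * n + 1) = (x ^ n) ^ 2 * x := by
  rw [pow_succ, pow_mul']

theorem catenoidH_eq (ℓ y : ℝ) (n : ℕ) :
    catenoidH ℓ n y = (((2*y+ℓ)^n)^2 * (2*y+ℓ) + ((2*y-ℓ)^n)^2 * (2*y-ℓ)) /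
      (4 * ((2*y+ℓ)^n * (2*y-ℓ)^n)) := by
  rw [catenoidH, show 4*y^2 - ℓ^2 = (2*y+ℓ) * (2*y-ℓ) by ring, mul_pow, pow_two_mul_add_one,
    pow_two_mul_add_one]

theorem catenoidD_eq (ℓ y : ℝ) (n : ℕ) :
    catenoidD ℓ n y = (((2*y+ℓ)^n)^2 * (2*y+ℓ) - ((2*y-ℓ)^n)^2 * (2*y-ℓ)) /
      (2 * ((2*y+ℓ)^n * (2*y-ℓ)^n)) := by
  rw [catenoidD, show 4*y^2 - ℓ^2 = (2*y+ℓ) * (2*y-ℓ) by ring, mul_pow, pow_two_mul_add_one,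
    pow_two_mul_add_one]

section Identities

variable {ℓ y : ℝ} (hu : 2 * y + ℓ ≠ 0) (hv : 2 * y - ℓ ≠ 0) (n : ℕ)
include hu hv

/-- `cosh² − sinh² = 1`. -/
theorem catenoidH_sq_sub_catenoidD_sq :
    catenoidH ℓ n y ^ 2 - (catenoidD ℓ n y / 2) ^ 2 = y^2 - ℓ^2/4 := by
  have hp := pow_ne_zero n hu
  have hq := pow_ne_zero n hv
  rw [catenoidD_eq, catenoidH_eq]
  generalize (2*y+ℓ)^n = p at hp ⊢
  generalize (2*y-ℓ)^n = q at hq ⊢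
  field_simp
  ring

theorem catenoidD_succ_sub_sq :
    ((catenoidD ℓ (n+1) y - catenoidD ℓ n y) / 2)^2 =
      (catenoidH ℓ (n+1) y - catenoidH ℓ n y)^2 + ℓ^2 := by
  have hp := pow_ne_zero n hu
  have hq := pow_ne_zero n hv
  rw [catenoidD_eq, catenoidD_eq, catenoidH_eq, catenoidH_eq, pow_succ (2*y + ℓ) n,
    pow_succ (2*y - ℓ) n]
  generalize (2*y+ℓ)^n = p at hp ⊢
  generalize (2*y-ℓ)^n = q at hq ⊢
  field_simp
  ring

end Identities

theorem coneS_comm (ℓ s t : ℝ) : coneS ℓ s t = coneS ℓ t s := by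
  rw [coneS, coneS, add_comm, ← neg_sub, neg_sq]

theorem hasDerivAt_coneS_right {ℓ : ℝ} (hℓ : ℓ ≠ 0) (s t : ℝ) :
    HasDerivAt (coneS ℓ s)
      (√((t - s)^2 + ℓ^2) + (s + t) * (t - s) / √((t - s)^2 + ℓ^2)) t := by
  have hpos : 0 < (t - s)^2 + ℓ^2 := by positivity
  have hsq : HasDerivAt (fun x => (x - s)^2 + ℓ^2) (2 * (t - s)) t := by
    simpa using (((hasDerivAt_id' t).sub_const s).fun_pow 2).add_const (ℓ^2)
  refine (((hasDerivAt_id' t).const_add s).mul (hsq.sqrt hpos.ne')).congr_deriv ?_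
  field_simp

theorem hasDerivAt_coneS_left {ℓ : ℝ} (hℓ : ℓ ≠ 0) (s t : ℝ) :
    HasDerivAt (fun x => coneS ℓ x t)
      (√((t - s)^2 + ℓ^2) - (s + t) * (t - s) / √((t - s)^2 + ℓ^2)) s := by
  simp_rw [coneS_comm ℓ _ t]
  convert hasDerivAt_coneS_right hℓ t s using 1
  rw [← neg_sub t s, neg_sq]
  ring

section Catenary

variable {ℓ y : ℝ} (hℓ : 0 < ℓ) (hy : ℓ / 2 < y) (n : ℕ)
include hℓ hy

theorem catenoidD_lt_succ : catenoidD ℓ n y < catenoidD ℓ (n+1) y := by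
  have hu : 0 < 2*y + ℓ := by linarith
  have hv : 0 < 2*y - ℓ := by linarith
  have hp := pow_pos hu n
  have hq := pow_pos hv n
  rw [catenoidD_eq, catenoidD_eq, pow_succ (2*y + ℓ) n, pow_succ (2*y - ℓ) n, ← sub_pos]
  generalize (2*y+ℓ)^n = p at hp ⊢
  generalize (2*y-ℓ)^n = q at hq ⊢
  convert_to 0 < ℓ * ((p * (2*y+ℓ))^2 + (q * (2*y-ℓ))^2) / (p * (2*y+ℓ) * (q * (2*y-ℓ)))
  · field_simp
    ring
  · positivity

theorem sqrt_catenoidH_succ_sub_sq_add_sq :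
    √((catenoidH ℓ (n+1) y - catenoidH ℓ n y)^2 + ℓ^2) =
      (catenoidD ℓ (n+1) y - catenoidD ℓ n y) / 2 := by
  rw [← catenoidD_succ_sub_sq (by linarith) (by linarith), Real.sqrt_sq]
  linarith [catenoidD_lt_succ hℓ hy n]

theorem catenoidH_coneS_slope :
    (catenoidH ℓ n y + catenoidH ℓ (n+1) y) * (catenoidH ℓ (n+1) y - catenoidH ℓ n y) /
        √((catenoidH ℓ (n+1) y - catenoidH ℓ n y)^2 + ℓ^2) =
      (catenoidD ℓ (n+1) y + catenoidD ℓ n y) / 2 := by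
  have hlt := catenoidD_lt_succ hℓ hy n
  have hu : 2*y + ℓ ≠ 0 := by linarith
  have hv : 2*y - ℓ ≠ 0 := by linarith
  rw [sqrt_catenoidH_succ_sub_sq_add_sq hℓ hy, div_eq_iff (by linarith)]
  linear_combination
    catenoidH_sq_sub_catenoidD_sq hu hv (n+1) - catenoidH_sq_sub_catenoidD_sq hu hv n

theorem hasDerivAt_coneS_catenoidH_right :
    HasDerivAt (coneS ℓ (catenoidH ℓ n y)) (catenoidD ℓ (n+1) y) (catenoidH ℓ (n+1) y) := by
  convert hasDerivAt_coneS_right hℓ.ne' _ _ using 1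
  rw [catenoidH_coneS_slope hℓ hy, sqrt_catenoidH_succ_sub_sq_add_sq hℓ hy]
  ring

theorem hasDerivAt_coneS_catenoidH_left :
    HasDerivAt (fun x => coneS ℓ x (catenoidH ℓ (n+1) y)) (-catenoidD ℓ n y)
      (catenoidH ℓ n y) := by
  convert hasDerivAt_coneS_left hℓ.ne' _ _ using 1
  rw [catenoidH_coneS_slope hℓ hy, sqrt_catenoidH_succ_sub_sq_add_sq hℓ hy]
  ring

end Catenary

theorem coneT_eq_sum {a ℓ : ℝ} {m : ℕ} {y : ℕ → ℝ} (hm : m ≠ 0) (hym : y m = a) :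
    coneT a ℓ m y = y 0 * ℓ + ∑ k ∈ range m, coneS ℓ (y k) (y (k+1)) := by
  obtain ⟨m, rfl⟩ := Nat.exists_eq_succ_of_ne_zero hm
  rw [coneT, sum_range_succ, ← hym]
  simp only [Nat.succ_sub_one, add_assoc]

theorem hasDerivAt_update_apply (y : ℕ → ℝ) (i k : ℕ) :
    HasDerivAt (fun t => Function.update y i t k) (if k = i then 1 else 0) (y i) := by
  rcases eq_or_ne k i with rfl | hki
  · simpa using hasDerivAt_id' (y k)
  · simpa [Function.update_of_ne hki, hki] using hasDerivAt_const (y i) (y k)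

theorem hasDerivAt_update_pair {g : ℝ → ℝ → ℝ} {y : ℕ → ℝ} {i k : ℕ} {dl dr : ℝ}
    (hl : HasDerivAt (fun x => g x (y (k+1))) dl (y k))
    (hr : HasDerivAt (g (y k)) dr (y (k+1))) :
    HasDerivAt (fun t => g (Function.update y i t k) (Function.update y i t (k+1)))
      ((if k+1 = i then dr else 0) + (if k = i then dl else 0)) (y i) := by
  rcases eq_or_ne k i with rfl | hki
  · simpa [Function.update_of_ne (Nat.succ_ne_self k)] using hl
  rcases eq_or_ne (k+1) i with rfl | hk1
  · simpa [Function.update_of_ne hki] using hr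
  simpa [Function.update_of_ne hki, Function.update_of_ne hk1, hki, hk1] using
    hasDerivAt_const (y i) (g (y k) (y (k+1)))

theorem hasDerivAt_coneT_update_of_flux {a ℓ : ℝ} {m i : ℕ} {y D : ℕ → ℝ} (hi : i < m)
    (hym : y m = a) (hD : D 0 = ℓ)
    (hl : ∀ n < m, HasDerivAt (fun x => coneS ℓ x (y (n+1))) (-D n) (y n))
    (hr : ∀ n < m, HasDerivAt (coneS ℓ (y n)) (D (n+1)) (y (n+1))) :
    HasDerivAt (fun t => coneT a ℓ m (Function.update y i t)) 0 (y i) := by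
  -- cone `k` contributes `φ (k+1) - φ k`, so the cones telescope to `-φ 0`, cancelled by the disc
  set φ : ℕ → ℝ := fun k => if k = i then D k else 0
  have hT : (fun t => coneT a ℓ m (Function.update y i t)) = fun t =>
      Function.update y i t 0 * ℓ + ∑ k ∈ range m,
        coneS ℓ (Function.update y i t k) (Function.update y i t (k+1)) := by
    funext t
    exact coneT_eq_sum (by omega) (by rwa [Function.update_of_ne (by omega)])
  have hdisc : HasDerivAt (fun t => Function.update y i t 0 * ℓ) (φ 0) (y i) := by
    refine ((hasDerivAt_update_apply y i 0).mul_const ℓ).congr_deriv ?_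
    rcases eq_or_ne 0 i with rfl | h0
    · simp [φ, hD]
    · simp [φ, h0]
  have hcones : HasDerivAt (fun t => ∑ k ∈ range m,
      coneS ℓ (Function.update y i t k) (Function.update y i t (k+1)))
      (∑ k ∈ range m, (φ (k+1) - φ k)) (y i) := by
    refine HasDerivAt.fun_sum fun k hk => ?_
    have hk : k < m := mem_range.1 hk
    refine (hasDerivAt_update_pair (hl k hk) (hr k hk)).congr_deriv ?_
    simp only [φ]
    split_ifs <;> ring
  rw [hT]
  refine (hdisc.add hcones).congr_deriv ?_
  rw [sum_range_sub, add_sub_cancel]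
  simp [φ, hi.ne']

theorem stmt_9_general (ℓ : ℝ) (hℓ : 0 < ℓ) (m : ℕ)
    (ystar : ℝ) (hy : ℓ/2 < ystar) (a : ℝ) (ha : a = catenoidH ℓ m ystar) :
    ∀ i : ℕ, i < m →
      deriv (fun t : ℝ =>
          coneT a ℓ m (Function.update (fun j : ℕ => catenoidH ℓ j ystar) i t))
        (catenoidH ℓ i ystar) = 0 := fun _ hi =>
  (hasDerivAt_coneT_update_of_flux hi ha.symm (catenoidD_zero ℓ ystar)
    (fun n _ => hasDerivAt_coneS_catenoidH_left hℓ hy n)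
    (fun n _ => hasDerivAt_coneS_catenoidH_right hℓ hy n)).deriv

theorem stmt_9 (ℓ : ℝ) (hℓ : 0 < ℓ) (m : ℕ) (hm : 1 ≤ m)
    (ystar : ℝ) (hy : ℓ/2 < ystar) (a : ℝ) (ha : a = catenoidH ℓ m ystar) :
    ∀ i : ℕ, i < m →
      deriv (fun t : ℝ =>
          coneT a ℓ m (Function.update (fun j : ℕ => catenoidH ℓ j ystar) i t))
        (catenoidH ℓ i ystar) = 0 :=
  stmt_9_general ℓ hℓ m ystar hy a ha
end

section
/- (Lemma 3.2, part 1) Let ℓ > 0 and let n ≥ 1 be an integer. If μ_{n,ℓ} and μ_{n+1,ℓ} are the unique points in (ℓ/2, ∞) at which h_{n,ℓ} and h_{n+1,ℓ}, respectively, attain their minimum over (ℓ/2, ∞), then μ_{n+1,ℓ} > μ_{n,ℓ} and h_{n+1,ℓ}(μ_{n+1,ℓ}) > h_{n,ℓ}(μ_{n,ℓ}), i.e., ν_{n+1,ℓ} > ν_{n,ℓ} for the minimum values ν. -/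
/-!
With `a = 2y + ℓ` and `b = 2y - ℓ`, so that `a - b = 2ℓ` and `ab = 4y² - ℓ²`, one has
`h_{n+1} - h_n = (ℓ/2)·((a/b)^(n+1) - (b/a)^(n+1))`. On `(ℓ/2, ∞)` this gap is positive, which gives
`ν_n ≤ h_n(μ_{n+1}) < ν_{n+1}`, and it is strictly decreasing with negative derivative. Adding a
strictly decreasing function to `h_n` can only move its minimiser to the right, so `μ_n ≤ μ_{n+1}`;
and if `μ_n = μ_{n+1}`, both `h_n` and `h_{n+1}` would have a critical point there, so the derivative
of the gap would vanish.
-/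

theorem IsMinOn.le_of_strictAntiOn_sub {α β : Type*} [LinearOrder α] [AddCommGroup β]
    [PartialOrder β] [IsOrderedAddMonoid β] {f g : α → β} {s : Set α} {a b : α}
    (hf : IsMinOn f s a) (hg : IsMinOn g s b) (ha : a ∈ s) (hb : b ∈ s)
    (hgf : StrictAntiOn (g - f) s) : a ≤ b := by
  by_contra! hba
  have hle : g b - f b ≤ g a - f a := sub_le_sub (hg ha) (hf hb)
  exact (hgf hb ha hba).not_ge hle

theorem IsLocalMin.eq_zero_of_hasDerivAt_sub {f g : ℝ → ℝ} {a d : ℝ}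
    (hf : IsLocalMin f a) (hg : IsLocalMin g a) (hfd : DifferentiableAt ℝ f a)
    (hgf : HasDerivAt (g - f) d a) : d = 0 := by
  have hg' : HasDerivAt g (deriv f a + d) a := by
    simpa using hfd.hasDerivAt.add hgf
  simpa [hf.deriv_eq_zero] using hg.hasDerivAt_eq_zero hg'

noncomputable def catenoidGap (ℓ : ℝ) (k : ℕ) (y : ℝ) : ℝ :=
  ℓ / 2 * (((2*y + ℓ) / (2*y - ℓ))^k - ((2*y - ℓ) / (2*y + ℓ))^k)

section

variable {ℓ y : ℝ}

theorem catenoidH_succ_sub (n : ℕ) (ha : 2*y + ℓ ≠ 0) (hb : 2*y - ℓ ≠ 0) :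
    catenoidH ℓ (n+1) y - catenoidH ℓ n y = catenoidGap ℓ (n+1) y := by
  have hab : 4*y^2 - ℓ^2 = (2*y + ℓ) * (2*y - ℓ) := by ring
  have hℓ : ℓ / 2 = ((2*y + ℓ) - (2*y - ℓ)) / 4 := by ring
  unfold catenoidH catenoidGap
  rw [hab, hℓ, div_pow, div_pow, mul_pow, mul_pow]
  field_simp
  ring

theorem differentiableAt_catenoidH (n : ℕ) (hy : 4*y^2 - ℓ^2 ≠ 0) :
    DifferentiableAt ℝ (catenoidH ℓ n) y := by
  unfold catenoidH
  exact DifferentiableAt.div (by fun_prop) (by fun_prop) (by simp [hy])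

theorem catenoidGap_pos (hℓ : 0 < ℓ) (hy : ℓ/2 < y) {k : ℕ} (hk : k ≠ 0) :
    0 < catenoidGap ℓ k y := by
  have ha : 0 < 2*y + ℓ := by linarith
  have hb : 0 < 2*y - ℓ := by linarith
  have hlt : (2*y - ℓ) / (2*y + ℓ) < (2*y + ℓ) / (2*y - ℓ) := by
    rw [div_lt_div_iff₀ ha hb]; nlinarith
  exact mul_pos (by positivity) (sub_pos.2 (pow_lt_pow_left₀ hlt (by positivity) hk))

theorem catenoidH_lt_catenoidH_succ (hℓ : 0 < ℓ) (hy : ℓ/2 < y) (n : ℕ) :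
    catenoidH ℓ n y < catenoidH ℓ (n+1) y := by
  rw [← sub_pos, catenoidH_succ_sub n (by linarith) (by linarith)]
  exact catenoidGap_pos hℓ hy n.succ_ne_zero

theorem exists_hasDerivAt_catenoidGap_neg (hℓ : 0 < ℓ) (hy : ℓ/2 < y) {k : ℕ} (hk : k ≠ 0) :
    ∃ d < 0, HasDerivAt (catenoidGap ℓ k) d y := by
  have ha : 0 < 2*y + ℓ := by linarith
  have hb : 0 < 2*y - ℓ := by linarith
  have hA : HasDerivAt (fun y => 2*y + ℓ) 2 y := by
    simpa using ((hasDerivAt_id y).const_mul 2).add_const ℓ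
  have hB : HasDerivAt (fun y => 2*y - ℓ) 2 y := by
    simpa using ((hasDerivAt_id y).const_mul 2).sub_const ℓ
  have hs : HasDerivAt (fun y => (2*y + ℓ) / (2*y - ℓ)) (-(4*ℓ) / (2*y - ℓ)^2) y :=
    (hA.fun_div hB hb.ne').congr_deriv (by ring)
  have hr : HasDerivAt (fun y => (2*y - ℓ) / (2*y + ℓ)) (4*ℓ / (2*y + ℓ)^2) y :=
    (hB.fun_div hA ha.ne').congr_deriv (by ring)
  refine ⟨_, ?_, ((hs.fun_pow k).sub (hr.fun_pow k)).const_mul (ℓ/2)⟩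
  have hk' : (0:ℝ) < k := by exact_mod_cast Nat.pos_of_ne_zero hk
  have hs' : 0 ≤ (k:ℝ) * ((2*y + ℓ) / (2*y - ℓ))^(k-1) * (4*ℓ / (2*y - ℓ)^2) := by positivity
  have hr' : 0 < (k:ℝ) * ((2*y - ℓ) / (2*y + ℓ))^(k-1) * (4*ℓ / (2*y + ℓ)^2) := by positivity
  rw [neg_div, mul_neg]
  exact mul_neg_of_pos_of_neg (by positivity) (by linarith)

theorem strictAntiOn_catenoidGap (hℓ : 0 < ℓ) {k : ℕ} (hk : k ≠ 0) :
    StrictAntiOn (catenoidGap ℓ k) (Set.Ioi (ℓ/2)) := by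
  refine strictAntiOn_of_deriv_neg (convex_Ioi _) (fun y hy => ?_) (fun y hy => ?_)
  · obtain ⟨d, -, h⟩ := exists_hasDerivAt_catenoidGap_neg hℓ hy hk
    exact h.continuousAt.continuousWithinAt
  · rw [interior_Ioi] at hy
    obtain ⟨d, hd, h⟩ := exists_hasDerivAt_catenoidGap_neg hℓ hy hk
    rwa [h.deriv]

end

theorem stmt_12_general (ℓ : ℝ) (hℓ : 0 < ℓ) (n : ℕ)
    (μn μn1 : ℝ) (hμn : μn ∈ Set.Ioi (ℓ/2)) (hμn1 : μn1 ∈ Set.Ioi (ℓ/2))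
    (hminn : ∀ y ∈ Set.Ioi (ℓ/2), catenoidH ℓ n μn ≤ catenoidH ℓ n y)
    (hminn1 : ∀ y ∈ Set.Ioi (ℓ/2), catenoidH ℓ (n+1) μn1 ≤ catenoidH ℓ (n+1) y) :
    μn < μn1 ∧ catenoidH ℓ n μn < catenoidH ℓ (n+1) μn1 := by
  have hgap : Set.EqOn (catenoidH ℓ (n+1) - catenoidH ℓ n) (catenoidGap ℓ (n+1))
      (Set.Ioi (ℓ/2)) := fun y (hy : ℓ/2 < y) =>
    catenoidH_succ_sub n (by linarith) (by linarith)
  have hmin : IsMinOn (catenoidH ℓ n) (Set.Ioi (ℓ/2)) μn := isMinOn_iff.2 hminn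
  have hmin1 : IsMinOn (catenoidH ℓ (n+1)) (Set.Ioi (ℓ/2)) μn1 := isMinOn_iff.2 hminn1
  have hle : μn ≤ μn1 := hmin.le_of_strictAntiOn_sub hmin1 hμn hμn1
    ((strictAntiOn_catenoidGap hℓ n.succ_ne_zero).congr hgap.symm)
  have hne : μn ≠ μn1 := by
    rintro rfl
    have hnhds : Set.Ioi (ℓ/2) ∈ nhds μn := Ioi_mem_nhds hμn
    have hdiff : DifferentiableAt ℝ (catenoidH ℓ n) μn :=
      differentiableAt_catenoidH n (by nlinarith [Set.mem_Ioi.1 hμn])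
    obtain ⟨d, hd, hderiv⟩ := exists_hasDerivAt_catenoidGap_neg hℓ hμn n.succ_ne_zero
    refine hd.ne (IsLocalMin.eq_zero_of_hasDerivAt_sub (hmin.isLocalMin hnhds)
      (hmin1.isLocalMin hnhds) hdiff ?_)
    exact hderiv.congr_of_eventuallyEq (Filter.eventuallyEq_of_mem hnhds hgap)
  exact ⟨hle.lt_of_ne hne, (hminn μn1 hμn1).trans_lt (catenoidH_lt_catenoidH_succ hℓ hμn1 n)⟩

theorem stmt_12 (ℓ : ℝ) (hℓ : 0 < ℓ) (n : ℕ) (hn : 1 ≤ n)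
    (μn μn1 : ℝ) (hμn : μn ∈ Set.Ioi (ℓ/2)) (hμn1 : μn1 ∈ Set.Ioi (ℓ/2))
    (hminn : ∀ y ∈ Set.Ioi (ℓ/2), catenoidH ℓ n μn ≤ catenoidH ℓ n y)
    (huniqn : ∀ y ∈ Set.Ioi (ℓ/2),
      (∀ z ∈ Set.Ioi (ℓ/2), catenoidH ℓ n y ≤ catenoidH ℓ n z) → y = μn)
    (hminn1 : ∀ y ∈ Set.Ioi (ℓ/2), catenoidH ℓ (n+1) μn1 ≤ catenoidH ℓ (n+1) y)
    (huniqn1 : ∀ y ∈ Set.Ioi (ℓ/2),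
      (∀ z ∈ Set.Ioi (ℓ/2), catenoidH ℓ (n+1) y ≤ catenoidH ℓ (n+1) z) → y = μn1) :
    μn < μn1 ∧ catenoidH ℓ n μn < catenoidH ℓ (n+1) μn1 :=
  stmt_12_general ℓ hℓ n μn μn1 hμn hμn1 hminn hminn1
end

section
/- (Lemma 3.2, part 2) Let ℓ > 0, m ≥ 1, and y > ℓ/2. If the derivative h'_{m,ℓ}(y) > 0, then h'_{n,ℓ}(y) > 0 for every n with 0 ≤ n ≤ m−1. -/
namespace catenoidH

def derivNumerator (a b : ℝ) (n : ℕ) : ℝ :=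
  (n + 1) * (a ^ (2 * n + 1) * b + a * b ^ (2 * n + 1)) - n * (a ^ (2 * n + 2) + b ^ (2 * n + 2))

theorem mul_derivNumerator_sub_derivNumerator_succ (a b : ℝ) (n : ℕ) :
    a * b * derivNumerator a b n - derivNumerator a b (n + 1) =
      (n + 1) * (a - b) ^ 2 * ((a ^ (n + 1)) ^ 2 + (b ^ (n + 1)) ^ 2) := by
  unfold derivNumerator
  push_cast
  ring

theorem derivNumerator_pos_of_succ {a b : ℝ} (hab : 0 < a * b) {n : ℕ}
    (h : 0 < derivNumerator a b (n + 1)) : 0 < derivNumerator a b n := by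
  have hdiff := mul_derivNumerator_sub_derivNumerator_succ a b n
  have hnonneg : 0 ≤ ((n : ℝ) + 1) * (a - b) ^ 2 * ((a ^ (n + 1)) ^ 2 + (b ^ (n + 1)) ^ 2) := by
    positivity
  exact pos_of_mul_pos_right (a := a * b) (by linarith) hab.le

theorem derivNumerator_pos_of_le {a b : ℝ} (hab : 0 < a * b) {m n : ℕ} (hnm : n ≤ m)
    (h : 0 < derivNumerator a b m) : 0 < derivNumerator a b n :=
  Nat.decreasingInduction (motive := fun k _ => 0 < derivNumerator a b k)
    (fun _ _ ih => derivNumerator_pos_of_succ hab ih) h hnm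

theorem hasDerivAt_catenoidH (ℓ : ℝ) (n : ℕ) {y : ℝ} (hy : 4 * y ^ 2 - ℓ ^ 2 ≠ 0) :
    HasDerivAt (catenoidH ℓ n)
      (derivNumerator (2 * y + ℓ) (2 * y - ℓ) n / (2 * (4 * y ^ 2 - ℓ ^ 2) ^ (n + 1))) y := by
  have hlin (c : ℝ) : HasDerivAt (fun y : ℝ => 2 * y + c) 2 y := by
    simpa using ((hasDerivAt_id y).const_mul 2).add_const c
  have hnum : HasDerivAt (fun y : ℝ => (2 * y + ℓ) ^ (2 * n + 1) + (2 * y - ℓ) ^ (2 * n + 1))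
      ((2 * n + 1) * (2 * y + ℓ) ^ (2 * n) * 2 + (2 * n + 1) * (2 * y - ℓ) ^ (2 * n) * 2) y := by
    simp_rw [sub_eq_add_neg]
    exact ((hlin ℓ).pow _).add ((hlin (-ℓ)).pow _) |>.congr_deriv (by push_cast; ring)
  have hden : HasDerivAt (fun y : ℝ => 4 * (4 * y ^ 2 - ℓ ^ 2) ^ n)
      (4 * (n * (4 * y ^ 2 - ℓ ^ 2) ^ (n - 1) * (4 * (2 * y)))) y := by
    simpa using ((((hasDerivAt_pow 2 y).const_mul 4).sub_const (ℓ ^ 2)).pow n).const_mul 4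
  refine (hnum.div hden (by positivity)).congr_deriv ?_
  rw [div_eq_div_iff (by positivity) (by positivity),
    show 4 * y ^ 2 - ℓ ^ 2 = (2 * y + ℓ) * (2 * y - ℓ) by ring]
  unfold derivNumerator
  rcases n with _ | n
  · simp only [pow_zero]
    ring
  · rw [Nat.add_sub_cancel]
    push_cast
    ring

theorem deriv_pos_iff {ℓ y : ℝ} (h : 0 < 4 * y ^ 2 - ℓ ^ 2) (n : ℕ) :
    0 < deriv (catenoidH ℓ n) y ↔ 0 < derivNumerator (2 * y + ℓ) (2 * y - ℓ) n := by
  rw [(hasDerivAt_catenoidH ℓ n h.ne').deriv]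
  exact div_pos_iff_of_pos_right (by positivity)

end catenoidH

theorem stmt_13_general (ℓ : ℝ) (hℓ : 0 < ℓ) (m : ℕ) (y : ℝ) (hy : ℓ/2 < y)
    (hpos : 0 < deriv (catenoidH ℓ m) y) :
    ∀ n : ℕ, n ≤ m - 1 → 0 < deriv (catenoidH ℓ n) y := by
  have hab : 0 < (2 * y + ℓ) * (2 * y - ℓ) := mul_pos (by linarith) (by linarith)
  have hsq : 0 < 4 * y ^ 2 - ℓ ^ 2 := by linarith
  intro n hn
  exact (catenoidH.deriv_pos_iff hsq n).2 <| catenoidH.derivNumerator_pos_of_le hab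
    (hn.trans (m.sub_le 1)) ((catenoidH.deriv_pos_iff hsq m).1 hpos)

theorem stmt_13 (ℓ : ℝ) (hℓ : 0 < ℓ) (m : ℕ) (hm : 1 ≤ m) (y : ℝ) (hy : ℓ/2 < y)
    (hpos : 0 < deriv (catenoidH ℓ m) y) :
    ∀ n : ℕ, n ≤ m - 1 → 0 < deriv (catenoidH ℓ n) y :=
  stmt_13_general ℓ hℓ m y hy hpos
end

section
/- (Lemma 5.1) For every integer m ≥ 1, setting ℓ := 2/(2m+1), one has η_∞ > ν_{m,ℓ}, where η_∞ is the minimum value of the function c ↦ c·cosh(1/c) over c ∈ (0, ∞) and ν_{m,ℓ} is the minimum value of h_{m,ℓ} over (ℓ/2, ∞). -/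
open Real Set

namespace Real

lemma abs_exp_sub_taylor_le {x : ℝ} (hx : |x| ≤ 1) :
    |exp x - (1 + x + x ^ 2 / 2 + x ^ 3 / 6 + x ^ 4 / 24)| ≤ |x| ^ 5 / 100 := by
  have h := exp_bound hx (n := 5) (by norm_num)
  norm_num [Finset.sum_range_succ, Nat.factorial] at h
  convert h using 3; ring

lemma abs_sinh_sub_taylor_le {x : ℝ} (hx : |x| ≤ 1) :
    |sinh x - (x + x ^ 3 / 6)| ≤ |x| ^ 5 / 100 := by
  have hp := abs_le.mp (abs_exp_sub_taylor_le hx)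
  have hn := abs_le.mp (abs_exp_sub_taylor_le (x := -x) (by rwa [abs_neg]))
  rw [abs_neg] at hn
  ring_nf at hp hn ⊢
  rw [sinh_eq, abs_le]
  constructor <;> linarith

lemma abs_cosh_sub_taylor_le {x : ℝ} (hx : |x| ≤ 1) :
    |cosh x - (1 + x ^ 2 / 2 + x ^ 4 / 24)| ≤ |x| ^ 5 / 100 := by
  have hp := abs_le.mp (abs_exp_sub_taylor_le hx)
  have hn := abs_le.mp (abs_exp_sub_taylor_le (x := -x) (by rwa [abs_neg]))
  rw [abs_neg] at hn
  ring_nf at hp hn ⊢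
  rw [cosh_eq, abs_le]
  constructor <;> linarith

lemma sinh_taylor_bounds {x : ℝ} (h₀ : 0 ≤ x) (h₁ : x ≤ 1) :
    x + x ^ 3 / 6 - x ^ 5 / 100 ≤ sinh x ∧ sinh x ≤ x + x ^ 3 / 6 + x ^ 5 / 100 := by
  have h := abs_le.mp (abs_sinh_sub_taylor_le (x := x) (by rwa [abs_of_nonneg h₀]))
  rw [abs_of_nonneg h₀] at h
  constructor <;> linarith

lemma cosh_taylor_bounds {x : ℝ} (h₀ : 0 ≤ x) (h₁ : x ≤ 1) :
    1 + x ^ 2 / 2 + x ^ 4 / 24 - x ^ 5 / 100 ≤ cosh x ∧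
      cosh x ≤ 1 + x ^ 2 / 2 + x ^ 4 / 24 + x ^ 5 / 100 := by
  have h := abs_le.mp (abs_cosh_sub_taylor_le (x := x) (by rwa [abs_of_nonneg h₀]))
  rw [abs_of_nonneg h₀] at h
  constructor <;> linarith

lemma four_ninths_le_tanh : 4 / 9 ≤ tanh (49 / 100) := by
  obtain ⟨hs, -⟩ := sinh_taylor_bounds (x := 49 / 100) (by norm_num) (by norm_num)
  obtain ⟨-, hc⟩ := cosh_taylor_bounds (x := 49 / 100) (by norm_num) (by norm_num)
  rw [tanh_eq_sinh_div_cosh, le_div_iff₀ (cosh_pos _)]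
  norm_num at hs hc ⊢
  linarith

lemma lt_cosh_four_thirds : 2.0215 < cosh (4 / 3) := by
  obtain ⟨hc, -⟩ := cosh_taylor_bounds (x := 2 / 3) (by norm_num) (by norm_num)
  rw [show (4 / 3 : ℝ) = 2 * (2 / 3) by norm_num, cosh_two_mul]
  have hsq := cosh_sq (2 / 3 : ℝ)
  norm_num at hc ⊢
  nlinarith

lemma cosh_four_thirds_le : cosh (4 / 3) ≤ 4 / 3 * sinh (4 / 3) := by
  obtain ⟨hs, -⟩ := sinh_taylor_bounds (x := 2 / 3) (by norm_num) (by norm_num)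
  obtain ⟨hc₁, hc₂⟩ := cosh_taylor_bounds (x := 2 / 3) (by norm_num) (by norm_num)
  rw [show (4 / 3 : ℝ) = 2 * (2 / 3) by norm_num, cosh_two_mul, sinh_two_mul]
  have hsq := cosh_sq (2 / 3 : ℝ)
  norm_num at hs hc₁ hc₂ ⊢
  nlinarith

lemma cosh_six_fifths_lt : cosh (6 / 5) < 1.8141 := by
  obtain ⟨hc₁, hc₂⟩ := cosh_taylor_bounds (x := 3 / 5) (by norm_num) (by norm_num)
  rw [show (6 / 5 : ℝ) = 2 * (3 / 5) by norm_num, cosh_two_mul]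
  have hsq := cosh_sq (3 / 5 : ℝ)
  norm_num at hc₁ hc₂ ⊢
  nlinarith

lemma cosh_add_mul_sinh_le_cosh_add {a d : ℝ} (ha : 0 ≤ a) (hd : 0 ≤ d) :
    cosh a + d * sinh a ≤ cosh (a + d) := by
  rw [cosh_add]
  have hsinh : d ≤ sinh d := self_le_sinh_iff.mpr hd
  have hcosh : 1 ≤ cosh d := one_le_cosh d
  have hsa : 0 ≤ sinh a := sinh_nonneg_iff.mpr ha
  nlinarith [cosh_pos a]

lemma cosh_add_le_cosh_mul_exp (a : ℝ) {d : ℝ} (hd : 0 ≤ d) :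
    cosh (a + d) ≤ cosh a * exp d := by
  rw [cosh_add, ← cosh_add_sinh d]
  have hsd : 0 ≤ sinh d := sinh_nonneg_iff.mpr hd
  nlinarith [sinh_lt_cosh a]

lemma sub_tanh_bounds {x : ℝ} (hx₀ : 0 < x) (hx₁ : x ≤ 49 / 100) :
    0 ≤ x - tanh x ∧ x - tanh x ≤ 7 / 20 * x ^ 2 * tanh x := by
  obtain ⟨hs₁, hs₂⟩ := sinh_taylor_bounds hx₀.le (by linarith)
  obtain ⟨hc₁, hc₂⟩ := cosh_taylor_bounds hx₀.le (by linarith)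
  have hC := cosh_pos x
  have hx₃ : x ^ 6 ≤ x ^ 3 ∧ x ^ 7 ≤ x ^ 3 :=
    ⟨pow_le_pow_of_le_one hx₀.le (by linarith) (by norm_num),
      pow_le_pow_of_le_one hx₀.le (by linarith) (by norm_num)⟩
  have hlow : 0 ≤ x * cosh x - sinh x := by
    nlinarith [mul_le_mul_of_nonneg_left hc₁ hx₀.le, pow_pos hx₀ 5]
  have hup : x * cosh x - sinh x ≤ 7 / 20 * x ^ 2 * sinh x := by
    nlinarith [mul_le_mul_of_nonneg_left hc₂ hx₀.le,
      mul_le_mul_of_nonneg_left hs₁ (sq_nonneg x), pow_pos hx₀ 3, pow_pos hx₀ 5]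
  have hsub : x - tanh x = (x * cosh x - sinh x) / cosh x := by
    rw [tanh_eq_sinh_div_cosh]
    field_simp
  rw [hsub, tanh_eq_sinh_div_cosh, mul_div_assoc']
  exact ⟨div_nonneg hlow hC.le, div_le_div_of_nonneg_right hup hC.le⟩

lemma exp_lt_cosh_of_le {x d : ℝ} (hx₀ : 0 < x) (hx₁ : x ≤ 49 / 100) (hd₀ : 0 ≤ d)
    (hd : d ≤ 7 / 15 * x ^ 2) : exp d < cosh x := by
  have hx2 : x ^ 2 ≤ 0.2401 := by nlinarith
  have hd₁ : d ≤ 0.113 := by linarith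
  have he := (abs_le.mp
    (abs_exp_sub_taylor_le (x := d) (by rw [abs_of_nonneg hd₀]; linarith))).2
  rw [abs_of_nonneg hd₀] at he
  obtain ⟨hc, -⟩ := cosh_taylor_bounds hx₀.le (by linarith)
  have hexp : exp d ≤ 1 + 1.06 * d := by
    have h2 : d ^ 2 ≤ 0.113 * d := by nlinarith
    have h3 : d ^ 3 ≤ 0.113 * d ^ 2 := by nlinarith
    have h4 : d ^ 4 ≤ 0.113 * d ^ 3 := by nlinarith
    have h5 : d ^ 5 ≤ 0.113 * d ^ 4 := by nlinarith
    nlinarith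
  have hcosh : 1 + x ^ 2 / 2 < cosh x := by
    have h5 : x ^ 5 ≤ x ^ 4 := pow_le_pow_of_le_one hx₀.le (by linarith) (by norm_num)
    nlinarith [pow_pos hx₀ 4, pow_pos hx₀ 2]
  nlinarith [pow_pos hx₀ 2]

lemma cosh_mul_lt_cosh_mul_cosh_mul_tanh {M x : ℝ} (hM : 0 ≤ M) (hx₀ : 0 < x)
    (hx₁ : x ≤ 49 / 100) (hMx : M * tanh x ≤ 4 / 3) :
    cosh (M * x) < cosh x * cosh (M * tanh x) := by
  obtain ⟨h₀, h₁⟩ := sub_tanh_bounds hx₀ hx₁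
  have hD₀ : 0 ≤ M * (x - tanh x) := mul_nonneg hM h₀
  have hD : M * (x - tanh x) ≤ 7 / 15 * x ^ 2 :=
    calc M * (x - tanh x) ≤ M * (7 / 20 * x ^ 2 * tanh x) := mul_le_mul_of_nonneg_left h₁ hM
      _ = 7 / 20 * x ^ 2 * (M * tanh x) := by ring
      _ ≤ 7 / 20 * x ^ 2 * (4 / 3) := by gcongr
      _ = 7 / 15 * x ^ 2 := by ring
  calc cosh (M * x) = cosh (M * tanh x + M * (x - tanh x)) := by ring_nf
    _ ≤ cosh (M * tanh x) * exp (M * (x - tanh x)) := cosh_add_le_cosh_mul_exp _ hD₀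
    _ < cosh (M * tanh x) * cosh x :=
        mul_lt_mul_of_pos_left (exp_lt_cosh_of_le hx₀ hx₁ hD₀ hD) (cosh_pos _)
    _ = cosh x * cosh (M * tanh x) := mul_comm _ _

lemma three_quarters_mul_cosh_le {c : ℝ} (hc₀ : 0 < c) (hc : c ≤ 3 / 4) :
    3 / 4 * cosh (4 / 3) ≤ c * cosh (1 / c) := by
  have hd : 0 ≤ 1 / c - 4 / 3 := by rw [sub_nonneg, le_div_iff₀ hc₀]; linarith
  have htangent := cosh_add_mul_sinh_le_cosh_add (a := 4 / 3) (by norm_num) hd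
  rw [add_sub_cancel] at htangent
  have hcd : c * ((1 / c - 4 / 3) * sinh (4 / 3)) = (1 - 4 / 3 * c) * sinh (4 / 3) := by
    field_simp
  nlinarith [mul_le_mul_of_nonneg_left htangent hc₀.le,
    mul_nonneg (sub_nonneg.mpr hc) (sub_nonneg.mpr cosh_four_thirds_le)]

end Real

lemma catenoidH_eq_mul_cosh {ℓ y a u : ℝ} (n : ℕ) (hadd : 2 * y + ℓ = a * exp u)
    (hsub : 2 * y - ℓ = a * exp (-u)) : catenoidH ℓ n y = a * cosh ((2 * n + 1) * u) / 2 := by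
  have he : exp u * exp (-u) = 1 := by rw [← exp_add]; simp
  have hsq : 4 * y ^ 2 - ℓ ^ 2 = a ^ 2 := by
    linear_combination (2 * y - ℓ) * hadd + a * exp u * hsub + a ^ 2 * he
  have hcosh : cosh ((2 * n + 1) * u) = (exp u ^ (2 * n + 1) + exp (-u) ^ (2 * n + 1)) / 2 := by
    rw [cosh_eq, ← exp_nat_mul, ← exp_nat_mul, ← mul_neg]
    push_cast
    ring_nf
  rw [catenoidH, hadd, hsub, hsq, hcosh, mul_pow, mul_pow, ← pow_mul]
  rcases eq_or_ne a 0 with rfl | ha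
  · simp
  · field_simp
    ring

lemma catenoidH_two_mul_mul_tanh (n : ℕ) (y x : ℝ) :
    catenoidH (2 * y * tanh x) n y = y * cosh ((2 * n + 1) * x) / cosh x := by
  have hC := (cosh_pos x).ne'
  rw [catenoidH_eq_mul_cosh (a := 2 * y / cosh x) (u := x) n]
  · field_simp
  · rw [tanh_eq_sinh_div_cosh, ← cosh_add_sinh]
    field_simp
  · rw [tanh_eq_sinh_div_cosh, ← cosh_sub_sinh]
    field_simp

lemma three_quarters_lt_of_isMinOn {c : ℝ} (hc₀ : 0 < c)
    (hmin : IsMinOn (fun c : ℝ => c * cosh (1 / c)) (Ioi 0) c) : 3 / 4 < c := by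
  by_contra! hc
  have hlow := three_quarters_mul_cosh_le hc₀ hc
  have hup : c * cosh (1 / c) ≤ 5 / 6 * cosh (6 / 5) := by
    simpa using hmin (show (5 / 6 : ℝ) ∈ Ioi 0 by norm_num)
  linarith [lt_cosh_four_thirds, cosh_six_fifths_lt]

lemma catenoidH_lt_mul_cosh_one_div {m : ℕ} (hm : 1 ≤ m) {c : ℝ} (hc : 3 / 4 < c) :
    catenoidH (2 / (2 * (m : ℝ) + 1)) m c < c * cosh (1 / c) := by
  have hM : (3 : ℝ) ≤ 2 * m + 1 := by
    have : (1 : ℝ) ≤ m := by exact_mod_cast hm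
    linarith
  set t := 1 / ((2 * (m : ℝ) + 1) * c) with ht
  have ht₀ : 0 < t := by positivity
  have ht₁ : t < 4 / 9 := by
    rw [ht, div_lt_iff₀ (by positivity)]
    nlinarith
  set x := artanh t
  have htanh : tanh x = t := tanh_artanh ⟨by linarith, by linarith⟩
  have hx₀ : 0 < x := artanh_pos ⟨ht₀, by linarith⟩
  have hx₁ : x ≤ 49 / 100 :=
    calc x ≤ artanh (tanh (49 / 100)) := by
          refine artanh_le_artanh (by linarith) ?_ (by linarith [four_ninths_le_tanh])
          rw [tanh_eq_sinh_div_cosh, div_lt_one (cosh_pos _)]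
          exact sinh_lt_cosh _
      _ = 49 / 100 := artanh_tanh _
  have hMx : (2 * (m : ℝ) + 1) * tanh x = 1 / c := by
    rw [htanh, ht]
    field_simp
  have hℓ : 2 / (2 * (m : ℝ) + 1) = 2 * c * tanh x := by
    rw [htanh, ht]
    field_simp
  have hMx_le : (2 * (m : ℝ) + 1) * tanh x ≤ 4 / 3 := by
    rw [hMx, div_le_iff₀ (by linarith)]
    linarith
  have hcosh := cosh_mul_lt_cosh_mul_cosh_mul_tanh (by linarith) hx₀ hx₁ hMx_le
  rw [hℓ, catenoidH_two_mul_mul_tanh, div_lt_iff₀ (cosh_pos x), ← hMx, mul_assoc,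
    mul_comm _ (cosh x)]
  exact mul_lt_mul_of_pos_left hcosh (by linarith)

theorem stmt_16 (m : ℕ) (hm : 1 ≤ m) (η ν : ℝ)
    (hη : IsLeast ((fun c : ℝ => c * Real.cosh (1/c)) '' Set.Ioi 0) η)
    (hν : IsLeast
      (catenoidH (2 / (2*(m:ℝ)+1)) m '' Set.Ioi ((2 / (2*(m:ℝ)+1)) / 2)) ν) :
    ν < η := by
  obtain ⟨c, hc₀, rfl⟩ := hη.1
  have hc : 3 / 4 < c :=
    three_quarters_lt_of_isMinOn hc₀ fun d hd => hη.2 (mem_image_of_mem _ hd)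
  have hc_mem : c ∈ Ioi ((2 / (2 * (m : ℝ) + 1)) / 2) := by
    rw [mem_Ioi, div_div, div_lt_iff₀ (by positivity)]
    have : (1 : ℝ) ≤ m := by exact_mod_cast hm
    nlinarith
  calc ν ≤ catenoidH (2 / (2 * (m : ℝ) + 1)) m c := hν.2 (mem_image_of_mem _ hc_mem)
    _ < c * cosh (1 / c) := catenoidH_lt_mul_cosh_one_div hm hc
end

section
/- (The case m = 1) Let a > 0 and ℓ > 0, and consider T_{a,1,ℓ}(y₀) := y₀·ℓ + (y₀ + a)·√((a − y₀)² + ℓ²) for y₀ > 0. Then y₀ > 0 satisfies dT_{a,1,ℓ}/dy₀(y₀) = 0 if and only if y₀ > ℓ/2 and a = y₀ + 4ℓ²y₀/(4y₀² − ℓ²). -/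
/-!
Multiplying `T' = ℓ + r + (y₀ + a)(y₀ - a)/r`, where `r = √((a - y₀)² + ℓ²)`, by `r > 0` turns the
critical-point equation into `ℓ r = 2 y₀ u - ℓ²` with `u = a - y₀`. Squaring, this says
`0 ≤ 2 y₀ u - ℓ²` and `u ((4 y₀² - ℓ²) u - 4 ℓ² y₀) = 0`; the sign condition forces `u > 0`, hence
`(4 y₀² - ℓ²) u = 4 ℓ² y₀`, which in turn forces `4 y₀² > ℓ²`.
-/

open Real

lemma mul_sqrt_eq_iff {c q w : ℝ} (hc : 0 < c) (hq : 0 ≤ q) :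
    c * √q = w ↔ 0 ≤ w ∧ c ^ 2 * q = w ^ 2 := by
  constructor
  · rintro rfl
    exact ⟨by positivity, by rw [mul_pow, sq_sqrt hq]⟩
  · rintro ⟨hw, h⟩
    rw [← pow_left_inj₀ (by positivity) hw two_ne_zero, mul_pow, sq_sqrt hq, h]

lemma hasDerivAt_mul_add_mul_sqrt (a : ℝ) {ℓ : ℝ} (hℓ : ℓ ≠ 0) (y : ℝ) :
    HasDerivAt (fun y : ℝ => y * ℓ + (y + a) * √((a - y) ^ 2 + ℓ ^ 2))
      (ℓ + √((a - y) ^ 2 + ℓ ^ 2) + (y + a) * (y - a) / √((a - y) ^ 2 + ℓ ^ 2)) y := by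
  have hq : (a - y) ^ 2 + ℓ ^ 2 ≠ 0 := by positivity
  have hinner : HasDerivAt (fun y : ℝ => (a - y) ^ 2 + ℓ ^ 2) (2 * (y - a)) y :=
    ((((hasDerivAt_id' y).const_sub a).pow 2).add_const (ℓ ^ 2)).congr_deriv (by ring)
  refine (((hasDerivAt_id' y).mul_const ℓ).add
    (((hasDerivAt_id' y).add_const a).mul (hinner.sqrt hq))).congr_deriv ?_
  field_simp
  ring

lemma deriv_mul_add_mul_sqrt_eq_zero_iff (a : ℝ) {ℓ : ℝ} (hℓ : ℓ ≠ 0) (y : ℝ) :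
    deriv (fun y : ℝ => y * ℓ + (y + a) * √((a - y) ^ 2 + ℓ ^ 2)) y = 0 ↔
      ℓ * √((a - y) ^ 2 + ℓ ^ 2) = 2 * y * (a - y) - ℓ ^ 2 := by
  set r := √((a - y) ^ 2 + ℓ ^ 2)
  have hr : r ≠ 0 := by positivity
  have hr2 : r ^ 2 = (a - y) ^ 2 + ℓ ^ 2 := sq_sqrt (by positivity)
  have hcleared : (ℓ + r + (y + a) * (y - a) / r) * r = ℓ * r + r ^ 2 + (y + a) * (y - a) := by
    field_simp
  rw [(hasDerivAt_mul_add_mul_sqrt a hℓ y).deriv, ← mul_left_inj' hr, zero_mul, hcleared, hr2]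
  constructor <;> intro h <;> linarith

lemma critical_point_condition_iff {ℓ y u : ℝ} (hℓ : 0 < ℓ) (hy : 0 < y) :
    (0 ≤ 2 * y * u - ℓ ^ 2 ∧ u * ((4 * y ^ 2 - ℓ ^ 2) * u - 4 * ℓ ^ 2 * y) = 0) ↔
      (ℓ / 2 < y ∧ u = 4 * ℓ ^ 2 * y / (4 * y ^ 2 - ℓ ^ 2)) := by
  constructor
  · rintro ⟨hsign, hprod⟩
    have hu : 0 < u := by
      by_contra! hu
      nlinarith [mul_nonneg hy.le (neg_nonneg.mpr hu)]
    have hlin : (4 * y ^ 2 - ℓ ^ 2) * u = 4 * ℓ ^ 2 * y := by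
      linarith [(mul_eq_zero.mp hprod).resolve_left hu.ne']
    have hden : 0 < 4 * y ^ 2 - ℓ ^ 2 := pos_of_mul_pos_left (hlin ▸ by positivity) hu.le
    refine ⟨by nlinarith, ?_⟩
    rw [eq_div_iff hden.ne', ← hlin, mul_comm]
  · rintro ⟨hhalf, rfl⟩
    have hden : 0 < 4 * y ^ 2 - ℓ ^ 2 := by nlinarith
    have hsign : 2 * y * (4 * ℓ ^ 2 * y / (4 * y ^ 2 - ℓ ^ 2)) - ℓ ^ 2
        = ℓ ^ 2 * (4 * y ^ 2 + ℓ ^ 2) / (4 * y ^ 2 - ℓ ^ 2) := by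
      rw [eq_div_iff hden.ne', sub_mul, mul_assoc, div_mul_cancel₀ _ hden.ne']
      ring
    refine ⟨hsign ▸ by positivity, ?_⟩
    field_simp
    ring

lemma mul_sqrt_sq_add_sq_eq_iff {ℓ y u : ℝ} (hℓ : 0 < ℓ) (hy : 0 < y) :
    ℓ * √(u ^ 2 + ℓ ^ 2) = 2 * y * u - ℓ ^ 2 ↔
      (ℓ / 2 < y ∧ u = 4 * ℓ ^ 2 * y / (4 * y ^ 2 - ℓ ^ 2)) := by
  rw [mul_sqrt_eq_iff hℓ (by positivity), ← critical_point_condition_iff hℓ hy]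
  refine and_congr_right fun _ => ?_
  constructor <;> intro h <;> linear_combination -h

theorem stmt_17_general (a ℓ : ℝ) (hℓ : 0 < ℓ) (y₀ : ℝ) (hy₀ : 0 < y₀) :
    deriv (fun y : ℝ => y * ℓ + (y + a) * Real.sqrt ((a - y)^2 + ℓ^2)) y₀ = 0 ↔
      (ℓ/2 < y₀ ∧ a = y₀ + 4*ℓ^2*y₀ / (4*y₀^2 - ℓ^2)) := by
  rw [deriv_mul_add_mul_sqrt_eq_zero_iff a hℓ.ne' y₀, mul_sqrt_sq_add_sq_eq_iff hℓ hy₀,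
    sub_eq_iff_eq_add']

theorem stmt_17 (a ℓ : ℝ) (ha : 0 < a) (hℓ : 0 < ℓ) (y₀ : ℝ) (hy₀ : 0 < y₀) :
    deriv (fun y : ℝ => y * ℓ + (y + a) * Real.sqrt ((a - y)^2 + ℓ^2)) y₀ = 0 ↔
      (ℓ/2 < y₀ ∧ a = y₀ + 4*ℓ^2*y₀ / (4*y₀^2 - ℓ^2)) :=
  stmt_17_general a ℓ hℓ y₀ hy₀
end
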